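/- (AND-gadget) Suppose s, s', t₁, t₁', t₂, t₂' are states in a pLTS such that t₁ ≁ t₂', and the only transitions outgoing from s and s' are s –a→ (t₁ with probability 1/2, t₂ with probability 1/2) and s' –a→ (t₁' with probability 1/2, t₂' with probability 1/2). Then s ∼ s' if and only if (t₁ ∼ t₁' and t₂ ∼ t₂'). -/

import Mathlib

open scoped ENNReal

noncomputable section

/-- A probabilistic labelled transition system (pLTS): states `S`, alphabet `A`,
and a transition relation into probability distributions (`PMF`s) on `S`. -/
structure PLTS (S : Type) (A : Type) where
  Tr : S → A → PMF S → Prop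

namespace PLTS

variable {S A : Type}

/-- The mass that a distribution assigns to a set of states. -/
def mass (d : PMF S) (E : Set S) : ℝ≥0∞ := ∑' s : E, d s

/-- Two distributions are `r`-equivalent if they assign equal mass to every
`r`-equivalence class (for an equivalence `r`, the classes are the sets `{t | r s t}`). -/
def REquiv (r : S → S → Prop) (d d' : PMF S) : Prop :=
  ∀ s : S, mass d {t | r s t} = mass d' {t | r s t}

/-- An equivalence relation is a bisimulation if related states can match
each other's transitions with `r`-equivalent target distributions. -/
def IsBisimulation (L : PLTS S A) (r : S → S → Prop) : Prop :=
  Equivalence r ∧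
    ∀ s t, r s t → ∀ a d, L.Tr s a d → ∃ d', L.Tr t a d' ∧ REquiv r d d'

/-- Bisimilarity: the union of all bisimulation relations. -/
def Bisim (L : PLTS S A) (s t : S) : Prop :=
  ∃ r, L.IsBisimulation r ∧ r s t

/-- The bisimulation approximants `∼ₙ`. -/
def approx (L : PLTS S A) : ℕ → S → S → Prop
  | 0 => fun _ _ => True
  | n + 1 => fun s t =>
      (∀ a d, L.Tr s a d → ∃ d', L.Tr t a d' ∧ REquiv (L.approx n) d d') ∧
      (∀ a d', L.Tr t a d' → ∃ d, L.Tr s a d ∧ REquiv (L.approx n) d d')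

/-- A pLTS is finitely branching if every state has finitely many transitions. -/
def FinBranching (L : PLTS S A) : Prop :=
  ∀ s, {p : A × PMF S | L.Tr s p.1 p.2}.Finite

/-- One-step successor relation: `s → s'` iff some transition of `s` gives `s'`
positive probability. -/
def Step (L : PLTS S A) (s s' : S) : Prop :=
  ∃ a d, L.Tr s a d ∧ d s' ≠ 0

end PLTS

namespace PLTS

variable {S A : Type}

/-- `d` is the distribution `x | y`: two distinct points each of probability 1/2. -/
def TwoHalf (d : PMF S) (x y : S) : Prop :=
  x ≠ y ∧ d x = 1 / 2 ∧ d y = 1 / 2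

/-- The only transition outgoing from `s` is `s –a→ d`. -/
def OnlyTr (L : PLTS S A) (s : S) (a : A) (d : PMF S) : Prop :=
  L.Tr s a d ∧ ∀ b e, L.Tr s b e → b = a ∧ e = d

end PLTS

/-!
`r`-equivalence of distributions is equality of their push-forwards to the quotient by `r`,
so it passes to every coarser equivalence. If `s ∼ s'`, the distributions `t₁ | t₂` and
`t₁' | t₂'` are `∼`-equivalent; as `t₁ ≁ t₂'`, the class of `t₁` (mass at least `1/2` under
the first) must contain `t₁'`, and likewise the class of `t₂'` must contain `t₂`. Conversely,
if `t₁ ∼ t₁'` and `t₂ ∼ t₂'`, the equivalence generated by `∼` and the pair `(s, s')` is a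
bisimulation: its pairs match each other's transitions up to the equivalence itself.
-/

namespace PLTS

variable {S A : Type} {r r' : S → S → Prop} {d d' d'' : PMF S}

theorem mass_eq_toOuterMeasure (d : PMF S) (E : Set S) : mass d E = d.toOuterMeasure E := by
  rw [mass, PMF.toOuterMeasure_apply, tsum_subtype]

theorem REquiv.refl (r : S → S → Prop) (d : PMF S) : REquiv r d d := fun _ => rfl

theorem REquiv.symm (h : REquiv r d d') : REquiv r d' d := fun s => (h s).symm

theorem REquiv.trans (h : REquiv r d d') (h' : REquiv r d' d'') : REquiv r d d'' :=
  fun s => (h s).trans (h' s)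

theorem map_quotientMk_apply (hr : Equivalence r) (d : PMF S) (s : S) :
    d.map (Quotient.mk ⟨r, hr⟩) (Quotient.mk _ s) = mass d {t | r s t} := by
  have hfiber : Quotient.mk ⟨r, hr⟩ ⁻¹' {Quotient.mk _ s} = {t | r s t} := by
    ext t
    exact Quotient.eq.trans ⟨hr.symm, hr.symm⟩
  rw [← PMF.toOuterMeasure_apply_singleton, PMF.toOuterMeasure_map_apply, hfiber,
    mass_eq_toOuterMeasure]

theorem rEquiv_iff_map_eq (hr : Equivalence r) :
    REquiv r d d' ↔ d.map (Quotient.mk ⟨r, hr⟩) = d'.map (Quotient.mk ⟨r, hr⟩) := by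
  simp only [REquiv, ← map_quotientMk_apply hr]
  exact ⟨fun h => PMF.ext (Quotient.ind h), fun h s => by rw [h]⟩

theorem REquiv.mono (hr : Equivalence r) (hr' : Equivalence r') (hle : ∀ x y, r x y → r' x y)
    (h : REquiv r d d') : REquiv r' d d' := by
  rw [rEquiv_iff_map_eq hr] at h
  rw [rEquiv_iff_map_eq hr']
  have hfactor : Quotient.mk ⟨r', hr'⟩ =
      Quotient.lift (Quotient.mk ⟨r', hr'⟩) (fun x y hxy => Quotient.sound (hle x y hxy)) ∘
        Quotient.mk ⟨r, hr⟩ := rfl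
  rw [hfactor, ← PMF.map_comp, ← PMF.map_comp, h]

section TwoHalf

variable {x y x' y' : S}

theorem TwoHalf.apply_eq_zero (h : TwoHalf d x y) {z : S} (hzx : z ≠ x) (hzy : z ≠ y) :
    d z = 0 := by
  classical
  obtain ⟨hxy, hx, hy⟩ := h
  have hsum : d x + d y + d z ≤ 1 := by
    calc d x + d y + d z = ∑ w ∈ {x, y, z}, d w := by
          rw [Finset.sum_insert (by simp [hxy, hzx.symm]),
            Finset.sum_insert (by simp [hzy.symm]), Finset.sum_singleton, add_assoc]
      _ ≤ ∑' w, d w := ENNReal.sum_le_tsum _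
      _ = 1 := d.tsum_coe
  rw [hx, hy, ENNReal.add_halves, ← add_zero (1 : ℝ≥0∞), add_assoc, zero_add] at hsum
  exact nonpos_iff_eq_zero.1 ((ENNReal.add_le_add_iff_left ENNReal.one_ne_top).1 hsum)

open Classical in
theorem TwoHalf.mass_eq (h : TwoHalf d x y) (E : Set S) :
    mass d E = (if x ∈ E then 1 / 2 else 0) + (if y ∈ E then 1 / 2 else 0) := by
  rw [mass, tsum_subtype, tsum_eq_sum (s := {x, y}) fun z hz => by
      simp only [Finset.mem_insert, Finset.mem_singleton, not_or] at hz
      simp [Set.indicator, h.apply_eq_zero hz.1 hz.2],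
    Finset.sum_insert (by simpa using h.1), Finset.sum_singleton]
  simp only [Set.indicator, h.2.1, h.2.2]

theorem TwoHalf.rEquiv (hr : Equivalence r) (hd : TwoHalf d x y) (hd' : TwoHalf d' x' y')
    (hx : r x x') (hy : r y y') : REquiv r d d' := by
  classical
  have hclass : ∀ {u p q}, r p q → (r u p ↔ r u q) := fun hpq =>
    ⟨fun h => hr.trans h hpq, fun h => hr.trans h (hr.symm hpq)⟩
  intro u
  simp only [hd.mass_eq, hd'.mass_eq, Set.mem_ofPred_eq, hclass hx, hclass hy]

theorem TwoHalf.rel_of_rEquiv (hr : Equivalence r) (hd : TwoHalf d x y)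
    (hd' : TwoHalf d' x' y') (hne : ¬ r x y') (h : REquiv r d d') : r x x' ∧ r y y' := by
  classical
  have hx := h x
  have hy' := h y'
  have hne' : ¬ r y' x := fun h => hne (hr.symm h)
  simp only [hd.mass_eq, hd'.mass_eq, Set.mem_ofPred_eq, hr.refl, hne, hne', if_true,
    if_false] at hx hy'
  constructor
  · by_contra hxx'
    simp [hxx'] at hx
  · by_contra hyy'
    have hy'y : ¬ r y' y := fun h => hyy' (hr.symm h)
    simp [hy'y, eq_comm (a := (0 : ℝ≥0∞))] at hy'

end TwoHalf

section Bisimulation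

variable {L : PLTS S A} {x y z : S}

def Matches (L : PLTS S A) (r : S → S → Prop) (x y : S) : Prop :=
  ∀ a d, L.Tr x a d → ∃ d', L.Tr y a d' ∧ REquiv r d d'

theorem Matches.refl (L : PLTS S A) (r : S → S → Prop) (x : S) : L.Matches r x x :=
  fun _ d hd => ⟨d, hd, REquiv.refl r d⟩

theorem Matches.trans (h : L.Matches r x y) (h' : L.Matches r y z) : L.Matches r x z := by
  intro a d hd
  obtain ⟨d₁, hd₁, h₁⟩ := h a d hd
  obtain ⟨d₂, hd₂, h₂⟩ := h' a d₁ hd₁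
  exact ⟨d₂, hd₂, h₁.trans h₂⟩

theorem Matches.mono (hr : Equivalence r) (hr' : Equivalence r') (hle : ∀ x y, r x y → r' x y)
    (h : L.Matches r x y) : L.Matches r' x y := by
  intro a d hd
  obtain ⟨d', hd', hdd'⟩ := h a d hd
  exact ⟨d', hd', hdd'.mono hr hr' hle⟩

theorem OnlyTr.matches {a : A} (hx : L.OnlyTr x a d) (hy : L.Tr y a d') (h : REquiv r d d') :
    L.Matches r x y := by
  intro b e he
  obtain ⟨rfl, rfl⟩ := hx.2 b e he
  exact ⟨d', hy, h⟩

theorem IsBisimulation.matches (hr : L.IsBisimulation r) (hxy : r x y) : L.Matches r x y :=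
  hr.2 x y hxy

theorem IsBisimulation.matches_both (hr : L.IsBisimulation r) (hr' : Equivalence r')
    (hle : ∀ x y, r x y → r' x y) (hxy : r x y) : L.Matches r' x y ∧ L.Matches r' y x :=
  ⟨(hr.matches hxy).mono hr.1 hr' hle, (hr.matches (hr.1.symm hxy)).mono hr.1 hr' hle⟩

theorem isBisimulation_eqvGen {ρ : S → S → Prop}
    (h : ∀ x y, ρ x y → L.Matches (Relation.EqvGen ρ) x y ∧ L.Matches (Relation.EqvGen ρ) y x) :
    L.IsBisimulation (Relation.EqvGen ρ) := by
  refine ⟨Relation.EqvGen.is_equivalence ρ, fun x y hxy => ?_⟩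
  suffices ∀ x y, Relation.EqvGen ρ x y →
      L.Matches (Relation.EqvGen ρ) x y ∧ L.Matches (Relation.EqvGen ρ) y x from
    (this x y hxy).1
  intro x y hxy
  induction hxy with
  | rel x y hxy => exact h x y hxy
  | refl x => exact ⟨Matches.refl L _ x, Matches.refl L _ x⟩
  | symm x y _ ih => exact ih.symm
  | trans x y z _ _ ih₁ ih₂ => exact ⟨ih₁.1.trans ih₂.1, ih₂.2.trans ih₁.2⟩

theorem bisim_of_eqvGen {ρ : S → S → Prop}
    (h : ∀ x y, ρ x y → L.Matches (Relation.EqvGen ρ) x y ∧ L.Matches (Relation.EqvGen ρ) y x)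
    (hxy : ρ x y) : L.Bisim x y :=
  ⟨_, isBisimulation_eqvGen h, Relation.EqvGen.rel x y hxy⟩

theorem Bisim.refl (L : PLTS S A) (x : S) : L.Bisim x x :=
  ⟨Eq, ⟨eq_equivalence, fun x _ hxy => hxy ▸ Matches.refl L Eq x⟩, rfl⟩

theorem Bisim.symm (h : L.Bisim x y) : L.Bisim y x :=
  let ⟨r, hr, hxy⟩ := h
  ⟨r, hr, hr.1.symm hxy⟩

theorem Bisim.trans (h : L.Bisim x y) (h' : L.Bisim y z) : L.Bisim x z := by
  obtain ⟨r₁, hr₁, hxy⟩ := h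
  obtain ⟨r₂, hr₂, hyz⟩ := h'
  let ρ : S → S → Prop := fun u v => r₁ u v ∨ r₂ u v
  have hbisim : L.IsBisimulation (Relation.EqvGen ρ) := by
    refine isBisimulation_eqvGen fun u v huv => ?_
    rcases huv with huv | huv
    · exact hr₁.matches_both (Relation.EqvGen.is_equivalence ρ)
        (fun p q h => .rel p q (.inl h)) huv
    · exact hr₂.matches_both (Relation.EqvGen.is_equivalence ρ)
        (fun p q h => .rel p q (.inr h)) huv
  exact ⟨_, hbisim, .trans x y z (.rel x y (.inl hxy)) (.rel y z (.inr hyz))⟩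

theorem bisim_equivalence (L : PLTS S A) : Equivalence L.Bisim :=
  ⟨Bisim.refl L, Bisim.symm, Bisim.trans⟩

theorem isBisimulation_bisim (L : PLTS S A) : L.IsBisimulation L.Bisim := by
  refine ⟨bisim_equivalence L, fun x y ⟨r, hr, hxy⟩ => ?_⟩
  exact (hr.matches hxy).mono hr.1 (bisim_equivalence L) fun p q h => ⟨r, hr, h⟩

end Bisimulation

end PLTS

theorem and_gadget_general (S A : Type) (L : PLTS S A) (a : A)
    (s s' t₁ t₁' t₂ t₂' : S) (d d' : PMF S)
    (hd : PLTS.TwoHalf d t₁ t₂) (hd' : PLTS.TwoHalf d' t₁' t₂')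
    (hs : L.OnlyTr s a d) (hs' : L.OnlyTr s' a d')
    (hne : ¬ L.Bisim t₁ t₂') :
    L.Bisim s s' ↔ (L.Bisim t₁ t₁' ∧ L.Bisim t₂ t₂') := by
  constructor
  · intro hss'
    obtain ⟨e, he, hde⟩ := L.isBisimulation_bisim.matches hss' a d hs.1
    obtain ⟨-, rfl⟩ := hs'.2 a e he
    exact hd.rel_of_rEquiv L.bisim_equivalence hd' hne hde
  · rintro ⟨h₁, h₂⟩
    let ρ : S → S → Prop := fun x y => L.Bisim x y ∨ (x = s ∧ y = s')
    have hρ : Equivalence (Relation.EqvGen ρ) := Relation.EqvGen.is_equivalence ρ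
    have hle : ∀ x y, L.Bisim x y → Relation.EqvGen ρ x y := fun x y h => .rel x y (.inl h)
    have hdd' : PLTS.REquiv (Relation.EqvGen ρ) d d' :=
      hd.rEquiv hρ hd' (hle _ _ h₁) (hle _ _ h₂)
    refine PLTS.bisim_of_eqvGen (fun x y hxy => ?_) (show ρ s s' from Or.inr ⟨rfl, rfl⟩)
    rcases hxy with hxy | ⟨rfl, rfl⟩
    · exact L.isBisimulation_bisim.matches_both hρ hle hxy
    · exact ⟨hs.matches hs'.1 hdd', hs'.matches hs.1 hdd'.symm⟩

/-- **AND-gadget.** If `t₁ ≁ t₂'` and the only transitions from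
`s, s'` are `s –a→ t₁ | t₂` and `s' –a→ t₁' | t₂'`, then
`s ∼ s'` iff (`t₁ ∼ t₁'` and `t₂ ∼ t₂'`). -/
theorem and_gadget (S A : Type) [Countable S] (L : PLTS S A) (a : A)
    (s s' t₁ t₁' t₂ t₂' : S) (d d' : PMF S)
    (hd : PLTS.TwoHalf d t₁ t₂) (hd' : PLTS.TwoHalf d' t₁' t₂')
    (hs : L.OnlyTr s a d) (hs' : L.OnlyTr s' a d')
    (hne : ¬ L.Bisim t₁ t₂') :
    L.Bisim s s' ↔ (L.Bisim t₁ t₁' ∧ L.Bisim t₂ t₂') :=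
  and_gadget_general S A L a s s' t₁ t₁' t₂ t₂' d d' hd hd' hs hs' hne
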